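/- Let (Ω, 𝒜, ℙ) be a probability space, m ≥ 1, and X = (X_1,…,X_m) an m-tuple of stochastic processes with right-continuous paths having left limits. Let ρ map each delayed and stopped version of X to a real random variable, let 𝒯 be a set of delays containing a refining sequence (τ^n)_{n∈ℕ} of phased delays increasing to identity, and set 𝒳 = {X⋄τ : τ ∈ 𝒯} ∪ {X}. Let δ be a decomposition scheme on 𝒳 whose values δ(Y) are m-tuples of right-continuous processes with left limits starting at 0 that are additive and normalized, and which is stable at X along (τ^n). Let Π be an increasing sequence of unbounded partitions of [0,∞) with mesh tending to 0, and suppose that for every Y ∈ 𝒳 the ISU decomposition δ^{ISU}(Y) of t ↦ ρ(Y^t) with respect to Π exists (as an m-tuple of right-continuous processes with left limits starting at 0) and that δ^{ISU} is stable at X along (τ^n). Then almost surely δ_i(X)(t) = δ^{ISU}_i(X)(t) for all i and all t ≥ 0. -/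

import Mathlib

/-!
On a phased delay `X ⋄ τⁿ` only one component moves on each phase of its partition.
Normalization pins every other component of a decomposition to its value at the start of the
phase, and additivity then determines the moving one, so any two additive normalized
decompositions of `X ⋄ τⁿ` agree. The SU sums are additive by telescoping and normalized because
their summands are local, so the ISU limit is such a decomposition. Stability carries the
agreement over to the left limits of the two decompositions of `X`, and a càdlàg path is
recovered from its left limits at rational times.
-/

open Filter Topology Set MeasureTheory

/-- A path is càdlàg on `[0,∞)`: right-continuous at every `t ≥ 0` and with left limits at
every `t > 0`. -/
def CadlagOn (f : ℝ → ℝ) : Prop :=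
  (∀ t, 0 ≤ t → ContinuousWithinAt f (Ici t) t) ∧
  (∀ t, 0 < t → ∃ L, Tendsto f (𝓝[<] t) (𝓝 L))

/-- A delay: each component is `[0,∞)`-valued, nondecreasing, right-continuous and bounded
above by the identity on `[0,∞)`. -/
def IsDelay {m : ℕ} (τ : Fin m → ℝ → ℝ) : Prop :=
  ∀ i, (∀ s, 0 ≤ s → 0 ≤ τ i s) ∧ (∀ s u, 0 ≤ s → s ≤ u → τ i s ≤ τ i u) ∧
    (∀ s, 0 ≤ s → ContinuousWithinAt (τ i) (Ici s) s) ∧ (∀ s, 0 ≤ s → τ i s ≤ s)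

/-- A delay is phased if there is an unbounded partition of `[0,∞)` such that on each
partition interval at most one of its components is non-constant. -/
def IsPhasedDelay {m : ℕ} (τ : Fin m → ℝ → ℝ) : Prop :=
  ∃ u : ℕ → ℝ, u 0 = 0 ∧ StrictMono u ∧ Tendsto u atTop atTop ∧
    ∀ l, ∃ i₀ : Fin m, ∀ j ≠ i₀,
      ∀ x ∈ Ioc (u l) (u (l + 1)), ∀ y ∈ Ioc (u l) (u (l + 1)), τ j x = τ j y

/-- A refining sequence of delays that increases to identity. -/
def IsRefiningToIdentity {m : ℕ} (τ : ℕ → Fin m → ℝ → ℝ) : Prop :=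
  ∀ (i : Fin m) (t : ℝ), 0 ≤ t →
    (∀ n, τ n i '' Icc 0 t ⊆ τ (n + 1) i '' Icc 0 t) ∧
    closure (⋃ n, τ n i '' Icc 0 t) = Icc 0 t

/-- The delayed process tuple `X ⋄ τ = (X_1 ∘ τ_1, …, X_m ∘ τ_m)`. -/
def delayed {Ω : Type*} {m : ℕ} (X : Fin m → Ω → ℝ → ℝ) (τ : Fin m → ℝ → ℝ) :
    Fin m → Ω → ℝ → ℝ :=
  fun i ω u => X i ω (τ i u)

/-- The componentwise stopped tuple of processes `Y^{(t_1,…,t_m)}`. -/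
noncomputable def stopProc {Ω : Type*} {m : ℕ} (Y : Fin m → Ω → ℝ → ℝ) (tv : Fin m → ℝ) :
    Fin m → Ω → ℝ → ℝ :=
  fun i ω u => if u ≤ tv i then Y i ω u else Y i ω (tv i)

/-- A decomposition scheme `δ` on a family `𝒳` of process tuples is good if, for every
`Y ∈ 𝒳`, the decomposition `δ Y` starts at `0`, has càdlàg paths, is additive and is
normalized. -/
def IsGoodScheme {Ω : Type*} [MeasurableSpace Ω] (μ : Measure Ω) {m : ℕ}
    (ρ : (Fin m → Ω → ℝ → ℝ) → Ω → ℝ) (𝒳 : Set (Fin m → Ω → ℝ → ℝ))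
    (δ : (Fin m → Ω → ℝ → ℝ) → Fin m → ℝ → Ω → ℝ) : Prop :=
  ∀ Y ∈ 𝒳,
    (∀ (i : Fin m) ω, δ Y i 0 ω = 0) ∧
    (∀ (i : Fin m) ω, CadlagOn (fun t => δ Y i t ω)) ∧
    (∀ t, 0 ≤ t → ∀ᵐ ω ∂μ,
      ρ (stopProc Y fun _ => t) ω - ρ (stopProc Y fun _ => 0) ω =
        ∑ i : Fin m, δ Y i t ω) ∧
    (∀ (i : Fin m) (a b : ℝ), 0 ≤ a → a < b →
      (∀ ω, ∀ x ∈ Ioc a b, ∀ y ∈ Ioc a b, Y i ω x = Y i ω y) →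
      ∀ᵐ ω ∂μ, ∀ x ∈ Ioc a b, ∀ y ∈ Ioc a b, δ Y i x ω = δ Y i y ω)

/-- A decomposition scheme `δ` is stable at `X` along the delay sequence `τ`: the left
limits of `δ (X ⋄ τ n)` converge in probability to the left limits of `δ X`. -/
def StableAt {Ω : Type*} [MeasurableSpace Ω] (μ : Measure Ω) {m : ℕ}
    (X : Fin m → Ω → ℝ → ℝ) (τ : ℕ → Fin m → ℝ → ℝ)
    (δ : (Fin m → Ω → ℝ → ℝ) → Fin m → ℝ → Ω → ℝ) : Prop :=
  ∀ (i : Fin m) (t : ℝ), 0 < t →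
    TendstoInMeasure μ
      (fun n ω => Function.leftLim (fun s => δ (delayed X (τ n)) i s ω) t) atTop
      (fun ω => Function.leftLim (fun s => δ X i s ω) t)

/-- The sequentially-updated time vector `v^{l,i}(t)`. -/
def suV {m : ℕ} (s : ℕ → ℝ) (l : ℕ) (i : Fin m) (t : ℝ) : Fin m → ℝ :=
  fun j => if j ≤ i then min (s (l + 1)) t else min (s l) t

/-- The time vector `w^{l,i}(t)`: as `v^{l,i}(t)` but with `i`-th coordinate `s_l ∧ t`. -/
def suW {m : ℕ} (s : ℕ → ℝ) (l : ℕ) (i : Fin m) (t : ℝ) : Fin m → ℝ :=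
  fun j => if j < i then min (s (l + 1)) t else min (s l) t

namespace MeasureTheory

variable {α ι E : Type*} [MeasurableSpace α] {μ : Measure α} {l : Filter ι}

theorem tendstoInMeasure_const_self [PseudoMetricSpace E] (g : α → E) :
    TendstoInMeasure μ (fun _ : ι => g) l g := by
  rw [tendstoInMeasure_iff_dist]
  intro ε hε
  simpa [hε.not_ge] using tendsto_const_nhds

theorem TendstoInMeasure.add [SeminormedAddCommGroup E] {f f' : ι → α → E} {g g' : α → E}
    (hf : TendstoInMeasure μ f l g) (hf' : TendstoInMeasure μ f' l g') :
    TendstoInMeasure μ (fun i x => f i x + f' i x) l (fun x => g x + g' x) := by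
  rw [tendstoInMeasure_iff_dist] at hf hf' ⊢
  intro ε hε
  have hsub : ∀ i, {x | ε ≤ dist (f i x + f' i x) (g x + g' x)} ⊆
      {x | ε / 2 ≤ dist (f i x) (g x)} ∪ {x | ε / 2 ≤ dist (f' i x) (g' x)} := by
    intro i x hx
    by_contra! hlt
    simp only [mem_union, mem_ofPred_eq, not_or, not_le] at hlt
    have := dist_add_add_le (f i x) (f' i x) (g x) (g' x)
    exact (lt_of_le_of_lt this (by linarith [hlt.1, hlt.2])).not_ge hx
  have hsum := (hf (ε / 2) (half_pos hε)).add (hf' (ε / 2) (half_pos hε))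
  rw [add_zero] at hsum
  exact tendsto_of_tendsto_of_tendsto_of_le_of_le tendsto_const_nhds hsum (fun _ => zero_le)
    fun i => (measure_mono (hsub i)).trans (measure_union_le _ _)

theorem tendstoInMeasure_finset_sum [SeminormedAddCommGroup E] {κ : Type*} (s : Finset κ)
    {F : κ → ι → α → E} {G : κ → α → E} (h : ∀ j ∈ s, TendstoInMeasure μ (F j) l (G j)) :
    TendstoInMeasure μ (fun i x => ∑ j ∈ s, F j i x) l (fun x => ∑ j ∈ s, G j x) := by
  classical
  induction s using Finset.induction with
  | empty =>
    simp only [Finset.sum_empty]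
    exact tendstoInMeasure_const_self _
  | insert j s hj ih =>
    simp only [Finset.sum_insert hj]
    exact (h j (Finset.mem_insert_self _ _)).add
      (ih fun k hk => h k (Finset.mem_insert_of_mem hk))

end MeasureTheory

namespace CadlagOn

variable {f g : ℝ → ℝ} {t : ℝ}

theorem tendsto_leftLim (hf : CadlagOn f) (ht : 0 < t) :
    Tendsto f (𝓝[<] t) (𝓝 (Function.leftLim f t)) := by
  obtain ⟨L, hL⟩ := hf.2 t ht
  rwa [leftLim_eq_of_tendsto hL]

theorem tendsto_leftLim_nhdsGT (hf : CadlagOn f) (ht : 0 ≤ t) :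
    Tendsto (Function.leftLim f) (𝓝[>] t) (𝓝 (f t)) := by
  refine Metric.nhds_basis_closedBall.tendsto_right_iff.2 fun ε hε => ?_
  have hnear : ∀ᶠ x in 𝓝[>] t, f x ∈ Metric.closedBall (f t) ε :=
    ((hf.1 t ht).mono Ioi_subset_Ici_self).tendsto (Metric.closedBall_mem_nhds _ hε)
  obtain ⟨u, hu, hsub⟩ := mem_nhdsGT_iff_exists_Ioo_subset.1 hnear
  filter_upwards [Ioo_mem_nhdsGT hu] with q hq
  refine Metric.isClosed_closedBall.mem_of_tendsto (hf.tendsto_leftLim (ht.trans_lt hq.1)) ?_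
  filter_upwards [Ioo_mem_nhdsLT hq.1] with x hx using hsub ⟨hx.1, hx.2.trans hq.2⟩

theorem eq_of_leftLim_eq_ratCast (hf : CadlagOn f) (hg : CadlagOn g)
    (h : ∀ q : ℚ, 0 < (q : ℝ) → Function.leftLim f q = Function.leftLim g q) (ht : 0 ≤ t) :
    f t = g t := by
  obtain ⟨u, -, hu_gt, hu_lim⟩ := Real.exists_seq_rat_strictAnti_tendsto t
  have hu : Tendsto (fun n => (u n : ℝ)) atTop (𝓝[>] t) :=
    tendsto_nhdsWithin_iff.2 ⟨hu_lim, Eventually.of_forall hu_gt⟩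
  refine tendsto_nhds_unique ((hf.tendsto_leftLim_nhdsGT ht).comp hu) ?_
  refine (tendsto_congr fun n => ?_).1 ((hg.tendsto_leftLim_nhdsGT ht).comp hu)
  exact (h (u n) (ht.trans_lt (hu_gt n))).symm

end CadlagOn

section AlmostSure

variable {Ω : Type*} [MeasurableSpace Ω] {μ : Measure Ω} {F G : ℝ → Ω → ℝ}

theorem ae_eq_of_continuousWithinAt_Ici {a b : ℝ}
    (hF : ∀ ω, ContinuousWithinAt (F · ω) (Ici a) a) (hab : a < b)
    (h : ∀ x ∈ Ioo a b, F x =ᵐ[μ] F b) : F a =ᵐ[μ] F b := by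
  obtain ⟨u, -, hu_mem, hu_lim⟩ := exists_seq_strictAnti_tendsto' hab
  have hu : Tendsto u atTop (𝓝[Ici a] a) :=
    tendsto_nhdsWithin_iff.2 ⟨hu_lim, Eventually.of_forall fun n => (hu_mem n).1.le⟩
  filter_upwards [ae_all_iff.2 fun n => h (u n) (hu_mem n)] with ω hω
  exact tendsto_nhds_unique ((hF ω).tendsto.comp hu)
    (tendsto_const_nhds.congr fun n => (hω n).symm)

theorem ae_leftLim_eq_of_ae_eq (hF : ∀ ω, CadlagOn (F · ω)) (hG : ∀ ω, CadlagOn (G · ω))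
    (h : ∀ θ, 0 ≤ θ → F θ =ᵐ[μ] G θ) {t : ℝ} (ht : 0 < t) :
    (fun ω => Function.leftLim (F · ω) t) =ᵐ[μ] fun ω => Function.leftLim (G · ω) t := by
  obtain ⟨u, -, hu_mem, hu_lim⟩ := exists_seq_strictMono_tendsto' ht
  have hu : Tendsto u atTop (𝓝[<] t) :=
    tendsto_nhdsWithin_iff.2 ⟨hu_lim, Eventually.of_forall fun n => (hu_mem n).2⟩
  filter_upwards [ae_all_iff.2 fun n => h (u n) (hu_mem n).1.le] with ω hω
  refine tendsto_nhds_unique ((hF ω).tendsto_leftLim ht |>.comp hu) ?_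
  simpa only [Function.comp_def, hω] using (hG ω).tendsto_leftLim ht |>.comp hu

end AlmostSure

theorem sum_ite_le_sub_ite_lt {β M : Type*} [AddCommGroup M] {m : ℕ} (F : (Fin m → β) → M)
    (a b : β) :
    ∑ i : Fin m, (F (fun j => if j ≤ i then a else b) - F (fun j => if j < i then a else b)) =
      F (fun _ => a) - F (fun _ => b) := by
  set G : ℕ → M := fun k => F fun j => if (j : ℕ) < k then a else b
  have hstep : ∀ i : Fin m, F (fun j => if j ≤ i then a else b) -
      F (fun j => if j < i then a else b) = G (i + 1) - G i := by
    intro i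
    simp only [G, Fin.le_def, Fin.lt_def, Nat.lt_succ_iff]
  rw [Finset.sum_congr rfl fun i _ => hstep i,
    Fin.sum_univ_eq_sum_range (fun k => G (k + 1) - G k), Finset.sum_range_sub]
  simp [G]

section SequentialUpdating

variable {Ω : Type*} {m : ℕ} {ρ : (Fin m → Ω → ℝ → ℝ) → Ω → ℝ} {Y : Fin m → Ω → ℝ → ℝ}
  {g : ℕ → ℝ} {l : ℕ} {i : Fin m} {t : ℝ}

noncomputable def suTerm (ρ : (Fin m → Ω → ℝ → ℝ) → Ω → ℝ) (Y : Fin m → Ω → ℝ → ℝ)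
    (g : ℕ → ℝ) (l : ℕ) (i : Fin m) (t : ℝ) : Ω → ℝ :=
  fun ω => ρ (stopProc Y (suV g l i t)) ω - ρ (stopProc Y (suW g l i t)) ω

noncomputable def suDecomp (ρ : (Fin m → Ω → ℝ → ℝ) → Ω → ℝ) (Y : Fin m → Ω → ℝ → ℝ)
    (g : ℕ → ℝ) (i : Fin m) (t : ℝ) : Ω → ℝ :=
  fun ω => ∑ᶠ l, suTerm ρ Y g l i t ω

theorem suV_apply_of_ne {j : Fin m} (hj : j ≠ i) : suV g l i t j = suW g l i t j := by
  simp only [suV, suW, hj.le_iff_lt]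

theorem stopProc_eq_of_const {c b : ℝ}
    (hconst : ∀ ω, ∀ p ∈ Icc c b, ∀ q ∈ Icc c b, Y i ω p = Y i ω q) {tv tv' : Fin m → ℝ}
    (hoff : ∀ j ≠ i, tv j = tv' j) (h : tv i ∈ Icc c b) (h' : tv' i ∈ Icc c b) :
    stopProc Y tv = stopProc Y tv' := by
  funext j ω u
  rcases eq_or_ne j i with rfl | hji
  · simp only [stopProc]
    split_ifs with h₁ h₂ h₂
    · rfl
    · exact hconst ω u ⟨h'.1.trans (not_le.1 h₂).le, h₁.trans h.2⟩ _ h'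
    · exact hconst ω _ h u ⟨h.1.trans (not_le.1 h₁).le, h₂.trans h'.2⟩
    · exact hconst ω _ h _ h'
  · simp only [stopProc, hoff j hji]

/-- Once the mesh is below `x - c`, an SU summand at time `b ≥ x` either does not see `(x, b]`
or stops `Y i` twice inside `[c, b]`, where it is constant. -/
theorem suTerm_eq_of_const (hg : Monotone g) {c x b : ℝ} (hmesh : ∀ k, g (k + 1) - g k < x - c)
    (hxb : x ≤ b) (hconst : ∀ ω, ∀ p ∈ Icc c b, ∀ q ∈ Icc c b, Y i ω p = Y i ω q) (l : ℕ) :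
    suTerm ρ Y g l i b = suTerm ρ Y g l i x := by
  have hl : g l ≤ g (l + 1) := hg l.le_succ
  by_cases hx : g (l + 1) ≤ x
  · have hV : suV g l i b = suV g l i x := by
      funext j
      simp only [suV, min_eq_left hx, min_eq_left (hx.trans hxb), min_eq_left (hl.trans hx),
        min_eq_left ((hl.trans hx).trans hxb)]
    have hW : suW g l i b = suW g l i x := by
      funext j
      simp only [suW, min_eq_left hx, min_eq_left (hx.trans hxb), min_eq_left (hl.trans hx),
        min_eq_left ((hl.trans hx).trans hxb)]
    funext ω
    simp only [suTerm, hV, hW]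
  · have hcx : c < x := by linarith [hmesh l]
    have hcl : c < g l := by linarith [hmesh l]
    have hvanish : ∀ t, x ≤ t → t ≤ b → suTerm ρ Y g l i t = 0 := by
      intro t hxt htb
      have hmem : ∀ k, c < g k → min (g k) t ∈ Icc c b := fun k hk =>
        ⟨le_min hk.le (by linarith), (min_le_right _ _).trans htb⟩
      funext ω
      rw [suTerm, stopProc_eq_of_const hconst (fun j hj => suV_apply_of_ne hj)
        (by simpa [suV] using hmem _ (hcl.trans_le hl)) (by simpa [suW] using hmem _ hcl),
        sub_self, Pi.zero_apply]
    rw [hvanish b hxb le_rfl, hvanish x le_rfl hxb]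

theorem suTerm_eq_zero_of_le (hg : Monotone g) (ht : t ≤ g l) : suTerm ρ Y g l i t = 0 := by
  have ht' : t ≤ g (l + 1) := ht.trans (hg l.le_succ)
  have hV : suV g l i t = fun _ => t := by
    funext j
    simp only [suV, min_eq_right ht, min_eq_right ht', ite_self]
  have hW : suW g l i t = fun _ => t := by
    funext j
    simp only [suW, min_eq_right ht, min_eq_right ht', ite_self]
  funext ω
  simp only [suTerm, hV, hW, sub_self, Pi.zero_apply]

theorem sum_suTerm (ω : Ω) :
    ∑ i, suTerm ρ Y g l i t ω =
      ρ (stopProc Y fun _ => min (g (l + 1)) t) ω - ρ (stopProc Y fun _ => min (g l) t) ω :=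
  sum_ite_le_sub_ite_lt (fun tv => ρ (stopProc Y tv) ω) _ _

theorem sum_suDecomp (hg0 : g 0 = 0) (hg : Monotone g) (hg_top : Tendsto g atTop atTop)
    (ht : 0 ≤ t) (ω : Ω) :
    ∑ i, suDecomp ρ Y g i t ω = ρ (stopProc Y fun _ => t) ω - ρ (stopProc Y fun _ => 0) ω := by
  obtain ⟨L, hL⟩ := (hg_top.eventually_ge_atTop t).exists
  have hfin : ∀ i, suDecomp ρ Y g i t ω = ∑ l ∈ Finset.range L, suTerm ρ Y g l i t ω := by
    refine fun i => finsum_eq_sum_of_support_subset _ fun l hl => ?_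
    by_contra hlL
    simp only [Finset.coe_range, mem_Iio, not_lt] at hlL
    exact hl (congrFun (suTerm_eq_zero_of_le hg (hL.trans (hg hlL))) ω)
  simp only [hfin]
  rw [Finset.sum_comm]
  simp only [sum_suTerm]
  rw [Finset.sum_range_sub (fun l => ρ (stopProc Y fun _ => min (g l) t) ω), min_eq_right hL, hg0,
    min_eq_left ht]

end SequentialUpdating

section Decomposition

variable {Ω : Type*} [MeasurableSpace Ω] {μ : Measure Ω} {m : ℕ}
  {ρ : (Fin m → Ω → ℝ → ℝ) → Ω → ℝ} {Y : Fin m → Ω → ℝ → ℝ} {D D₁ D₂ : Fin m → ℝ → Ω → ℝ}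
  {s : ℕ → ℕ → ℝ}

def IsAdditiveDecomp (μ : Measure Ω) (ρ : (Fin m → Ω → ℝ → ℝ) → Ω → ℝ)
    (Y : Fin m → Ω → ℝ → ℝ) (D : Fin m → ℝ → Ω → ℝ) : Prop :=
  ∀ t, 0 ≤ t → ∀ᵐ ω ∂μ,
    ρ (stopProc Y fun _ => t) ω - ρ (stopProc Y fun _ => 0) ω = ∑ i, D i t ω

/-- Unlike the normalization in `IsGoodScheme`, this one also pins the value at the left
endpoint `a`. -/
def IsNormalizedDecomp (μ : Measure Ω) (Y : Fin m → Ω → ℝ → ℝ) (D : Fin m → ℝ → Ω → ℝ) :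
    Prop :=
  ∀ i a b, 0 ≤ a → a < b → (∀ ω, ∀ x ∈ Ioc a b, ∀ y ∈ Ioc a b, Y i ω x = Y i ω y) →
    D i a =ᵐ[μ] D i b

theorem isNormalizedDecomp_of_continuousWithinAt
    (hD : ∀ i ω, ∀ t, 0 ≤ t → ContinuousWithinAt (fun s => D i s ω) (Ici t) t)
    (h : ∀ i a b, 0 ≤ a → a < b → (∀ ω, ∀ x ∈ Ioc a b, ∀ y ∈ Ioc a b, Y i ω x = Y i ω y) →
      ∀ᵐ ω ∂μ, ∀ x ∈ Ioc a b, ∀ y ∈ Ioc a b, D i x ω = D i y ω) :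
    IsNormalizedDecomp μ Y D := fun i a b ha hab hY =>
  ae_eq_of_continuousWithinAt_Ici (fun ω => hD i ω a ha) hab fun x hx =>
    (h i a b ha hab hY).mono fun _ hω => hω x ⟨hx.1, hx.2.le⟩ b ⟨hab, le_rfl⟩

theorem isAdditiveDecomp_of_tendstoInMeasure_suDecomp
    (hlim : ∀ i t, 0 ≤ t → TendstoInMeasure μ (fun n => suDecomp ρ Y (s n) i t) atTop (D i t))
    (hs0 : ∀ n, s n 0 = 0) (hs : ∀ n, Monotone (s n)) (hs_top : ∀ n, Tendsto (s n) atTop atTop) :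
    IsAdditiveDecomp μ ρ Y D := by
  intro t ht
  have hsum : TendstoInMeasure μ (fun n ω => ∑ i, suDecomp ρ Y (s n) i t ω) atTop
      fun ω => ∑ i, D i t ω :=
    tendstoInMeasure_finset_sum _ fun i _ => hlim i t ht
  exact tendstoInMeasure_ae_unique (tendstoInMeasure_const_self _)
    (hsum.congr_left fun n => ae_of_all _ (sum_suDecomp (hs0 n) (hs n) (hs_top n) ht))

theorem isNormalizedDecomp_of_tendstoInMeasure_suDecomp
    (hlim : ∀ i t, 0 ≤ t → TendstoInMeasure μ (fun n => suDecomp ρ Y (s n) i t) atTop (D i t))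
    (hs : ∀ n, Monotone (s n))
    (hmesh : ∀ ε > (0 : ℝ), ∃ N, ∀ n ≥ N, ∀ k, s n (k + 1) - s n k < ε)
    (hD : ∀ i ω, ∀ t, 0 ≤ t → ContinuousWithinAt (fun s => D i s ω) (Ici t) t) :
    IsNormalizedDecomp μ Y D := by
  intro i a b ha hab hY
  refine ae_eq_of_continuousWithinAt_Ici (fun ω => hD i ω a ha) hab fun x hx => ?_
  obtain ⟨c, hac, hcx⟩ := exists_between hx.1
  obtain ⟨N, hN⟩ := hmesh (x - c) (sub_pos.2 hcx)
  have hconst : ∀ ω, ∀ p ∈ Icc c b, ∀ q ∈ Icc c b, Y i ω p = Y i ω q := fun ω p hp q hq =>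
    hY ω p ⟨hac.trans_le hp.1, hp.2⟩ q ⟨hac.trans_le hq.1, hq.2⟩
  have hSU : ∀ᶠ n in atTop, suDecomp ρ Y (s n) i b =ᵐ[μ] suDecomp ρ Y (s n) i x := by
    filter_upwards [eventually_ge_atTop N] with n hn
    refine ae_of_all _ fun ω => finsum_congr fun l => ?_
    exact congrFun (suTerm_eq_of_const (hs n) (hN n hn) hx.2.le hconst l) ω
  exact tendstoInMeasure_ae_unique (hlim i x (ha.trans hx.1.le))
    ((hlim i b (ha.trans hab.le)).congr' hSU EventuallyEq.rfl)

/-- Across an interval on which only `Y i₀` moves, normalization carries the agreement of the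
other components over, and additivity then forces agreement of the `i₀`-th one. -/
theorem ae_eq_of_single_active (h₁ : IsAdditiveDecomp μ ρ Y D₁) (h₂ : IsAdditiveDecomp μ ρ Y D₂)
    (hn₁ : IsNormalizedDecomp μ Y D₁) (hn₂ : IsNormalizedDecomp μ Y D₂) {a b : ℝ} (ha : 0 ≤ a)
    (hab : a < b) (i₀ : Fin m)
    (hY : ∀ j ≠ i₀, ∀ ω, ∀ x ∈ Ioc a b, ∀ y ∈ Ioc a b, Y j ω x = Y j ω y)
    (hstart : ∀ i, D₁ i a =ᵐ[μ] D₂ i a) (i : Fin m) : D₁ i b =ᵐ[μ] D₂ i b := by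
  have hoff : ∀ j ≠ i₀, D₁ j b =ᵐ[μ] D₂ j b := fun j hj =>
    ((hn₁ j a b ha hab (hY j hj)).symm.trans (hstart j)).trans (hn₂ j a b ha hab (hY j hj))
  rcases eq_or_ne i i₀ with rfl | hi
  · have hoff' : ∀ᵐ ω ∂μ, ∀ j ∈ Finset.univ.erase i, D₁ j b ω = D₂ j b ω := by
      refine ae_all_iff.2 fun j => ?_
      rcases eq_or_ne j i with rfl | hj
      · exact ae_of_all _ fun _ hj => absurd rfl (Finset.ne_of_mem_erase hj)
      · exact (hoff j hj).mono fun _ h _ => h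
    filter_upwards [h₁ b (ha.trans hab.le), h₂ b (ha.trans hab.le), hoff'] with ω e₁ e₂ e
    have hsum := e₁.symm.trans e₂
    rw [← Finset.add_sum_erase _ _ (Finset.mem_univ i), ← Finset.add_sum_erase _ _
      (Finset.mem_univ i), Finset.sum_congr rfl e] at hsum
    exact add_right_cancel hsum
  · exact hoff i hi

theorem ae_eq_of_phased (h₁ : IsAdditiveDecomp μ ρ Y D₁) (h₂ : IsAdditiveDecomp μ ρ Y D₂)
    (hn₁ : IsNormalizedDecomp μ Y D₁) (hn₂ : IsNormalizedDecomp μ Y D₂)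
    (h0 : ∀ i, D₁ i 0 =ᵐ[μ] D₂ i 0) {u : ℕ → ℝ} (hu0 : u 0 = 0) (hu : Monotone u)
    (hu_top : Tendsto u atTop atTop) (act : ℕ → Fin m)
    (hY : ∀ l, ∀ j ≠ act l, ∀ ω, ∀ x ∈ Ioc (u l) (u (l + 1)), ∀ y ∈ Ioc (u l) (u (l + 1)),
      Y j ω x = Y j ω y) (i : Fin m) {θ : ℝ} (hθ : 0 ≤ θ) :
    D₁ i θ =ᵐ[μ] D₂ i θ := by
  have hu_nonneg : ∀ l, 0 ≤ u l := fun l => hu0 ▸ hu l.zero_le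
  have hupto : ∀ l, ∀ θ ∈ Icc 0 (u l), ∀ i, D₁ i θ =ᵐ[μ] D₂ i θ := by
    intro l
    induction l with
    | zero =>
      intro θ hθ
      obtain rfl : θ = 0 := le_antisymm (hu0 ▸ hθ.2) hθ.1
      exact h0
    | succ l ih =>
      intro θ hθ
      rcases le_or_gt θ (u l) with hle | hlt
      · exact ih θ ⟨hθ.1, hle⟩
      · refine ae_eq_of_single_active h₁ h₂ hn₁ hn₂ (hu_nonneg l) hlt (act l) ?_
          (ih _ ⟨hu_nonneg l, le_rfl⟩)
        exact fun j hj ω x hx y hy =>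
          hY l j hj ω x ⟨hx.1, hx.2.trans hθ.2⟩ y ⟨hy.1, hy.2.trans hθ.2⟩
  obtain ⟨l, hl⟩ := (hu_top.eventually_ge_atTop θ).exists
  exact hupto l θ ⟨hθ, hl⟩ i

theorem IsPhasedDelay.ae_eq_delayed {X : Fin m → Ω → ℝ → ℝ} {τ : Fin m → ℝ → ℝ}
    (hτ : IsPhasedDelay τ) (h₁ : IsAdditiveDecomp μ ρ (delayed X τ) D₁)
    (h₂ : IsAdditiveDecomp μ ρ (delayed X τ) D₂) (hn₁ : IsNormalizedDecomp μ (delayed X τ) D₁)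
    (hn₂ : IsNormalizedDecomp μ (delayed X τ) D₂) (h0 : ∀ i, D₁ i 0 =ᵐ[μ] D₂ i 0) (i : Fin m)
    {θ : ℝ} (hθ : 0 ≤ θ) : D₁ i θ =ᵐ[μ] D₂ i θ := by
  obtain ⟨u, hu0, hu, hu_top, hphase⟩ := hτ
  choose act hact using hphase
  exact ae_eq_of_phased h₁ h₂ hn₁ hn₂ h0 hu0 hu.monotone hu_top act
    (fun l j hj ω x hx y hy => congrArg (X j ω) (hact l j hj x hx y hy)) i hθ

end Decomposition

theorem additive_normalized_stable_scheme_is_ISU_general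
    {Ω : Type*} [MeasurableSpace Ω] (μ : Measure Ω)
    {m : ℕ}
    (X : Fin m → Ω → ℝ → ℝ)
    (ρ : (Fin m → Ω → ℝ → ℝ) → Ω → ℝ)
    (𝒯 : Set (Fin m → ℝ → ℝ))
    (τ : ℕ → Fin m → ℝ → ℝ) (hτmem : ∀ n, τ n ∈ 𝒯)
    (hτphased : ∀ n, IsPhasedDelay (τ n))
    (δ : (Fin m → Ω → ℝ → ℝ) → Fin m → ℝ → Ω → ℝ)
    (hδ : IsGoodScheme μ ρ (insert X {Y | ∃ τ' ∈ 𝒯, Y = delayed X τ'}) δ)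
    (hδstab : StableAt μ X τ δ)
    -- the partition sequence Π
    (s : ℕ → ℕ → ℝ)
    (hs0 : ∀ n, s n 0 = 0) (hsmono : ∀ n, StrictMono (s n))
    (hsunbdd : ∀ n, Tendsto (s n) atTop atTop)
    (hmesh : ∀ ε > (0 : ℝ), ∃ N, ∀ n ≥ N, ∀ k, s n (k + 1) - s n k < ε)
    -- the ISU decomposition scheme with respect to Π: it exists on 𝒳 …
    (δISU : (Fin m → Ω → ℝ → ℝ) → Fin m → ℝ → Ω → ℝ)
    (hISU0 : ∀ Y ∈ insert X {Y | ∃ τ' ∈ 𝒯, Y = delayed X τ'},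
      ∀ (i : Fin m) ω, δISU Y i 0 ω = 0)
    (hISUcadlag : ∀ Y ∈ insert X {Y | ∃ τ' ∈ 𝒯, Y = delayed X τ'},
      ∀ (i : Fin m) ω, CadlagOn (fun t => δISU Y i t ω))
    (hISUlim : ∀ Y ∈ insert X {Y | ∃ τ' ∈ 𝒯, Y = delayed X τ'},
      ∀ (i : Fin m) (t : ℝ), 0 ≤ t →
        TendstoInMeasure μ
          (fun n ω => ∑ᶠ l : ℕ,
            (ρ (stopProc Y (suV (s n) l i t)) ω - ρ (stopProc Y (suW (s n) l i t)) ω))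
          atTop (δISU Y i t))
    -- … and is stable at X
    (hISUstab : StableAt μ X τ δISU) :
    ∀ᵐ ω ∂μ, ∀ (i : Fin m) (t : ℝ), 0 ≤ t → δ X i t ω = δISU X i t ω := by
  have hτX : ∀ n, delayed X (τ n) ∈ insert X {Y | ∃ τ' ∈ 𝒯, Y = delayed X τ'} :=
    fun n => Or.inr ⟨τ n, hτmem n, rfl⟩
  have hs : ∀ n, Monotone (s n) := fun n => (hsmono n).monotone
  have hdelayed : ∀ n i θ, 0 ≤ θ →
      δ (delayed X (τ n)) i θ =ᵐ[μ] δISU (delayed X (τ n)) i θ := by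
    intro n
    obtain ⟨hδ0, hδcadlag, hδadd, hδnorm⟩ := hδ _ (hτX n)
    have hSU := hISUlim _ (hτX n)
    exact (hτphased n).ae_eq_delayed hδadd
      (isAdditiveDecomp_of_tendstoInMeasure_suDecomp hSU hs0 hs hsunbdd)
      (isNormalizedDecomp_of_continuousWithinAt (fun i ω => (hδcadlag i ω).1) hδnorm)
      (isNormalizedDecomp_of_tendstoInMeasure_suDecomp hSU hs hmesh
        fun i ω => (hISUcadlag _ (hτX n) i ω).1)
      fun i => ae_of_all _ fun ω => (hδ0 i ω).trans (hISU0 _ (hτX n) i ω).symm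
  have hrat : ∀ᵐ ω ∂μ, ∀ i (q : ℚ), 0 < (q : ℝ) →
      Function.leftLim (δ X i · ω) q = Function.leftLim (δISU X i · ω) q :=
    ae_all_iff.2 fun i => ae_all_iff.2 fun q => ae_all_iff.2 fun hq =>
      tendstoInMeasure_ae_unique ((hδstab i q hq).congr_left fun n =>
        ae_leftLim_eq_of_ae_eq (fun ω => (hδ _ (hτX n)).2.1 i ω)
          (fun ω => hISUcadlag _ (hτX n) i ω) (hdelayed n i) hq) (hISUstab i q hq)
  filter_upwards [hrat] with ω hω i t ht
  exact ((hδ X (mem_insert _ _)).2.1 i ω).eq_of_leftLim_eq_ratCast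
    (hISUcadlag X (mem_insert _ _) i ω) (hω i) ht

/-- Theorem 5.2, ISU representation. Any additive, normalized
decomposition scheme `δ` that is stable at `X` coincides almost surely at `X` with the ISU
decomposition scheme (the limit in probability of the SU decompositions along an increasing
sequence of unbounded partitions with vanishing mesh), provided the latter exists and is
stable at `X`. -/
theorem additive_normalized_stable_scheme_is_ISU
    {Ω : Type*} [MeasurableSpace Ω] (μ : Measure Ω) [IsProbabilityMeasure μ]
    {m : ℕ} (hm : 1 ≤ m)
    (X : Fin m → Ω → ℝ → ℝ) (hX : ∀ i ω, CadlagOn (X i ω))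
    (ρ : (Fin m → Ω → ℝ → ℝ) → Ω → ℝ)
    (𝒯 : Set (Fin m → ℝ → ℝ)) (h𝒯 : ∀ τ' ∈ 𝒯, IsDelay τ')
    (τ : ℕ → Fin m → ℝ → ℝ) (hτmem : ∀ n, τ n ∈ 𝒯)
    (hτdelay : ∀ n, IsDelay (τ n))
    (hτphased : ∀ n, IsPhasedDelay (τ n))
    (hτref : IsRefiningToIdentity τ)
    (δ : (Fin m → Ω → ℝ → ℝ) → Fin m → ℝ → Ω → ℝ)
    (hδ : IsGoodScheme μ ρ (insert X {Y | ∃ τ' ∈ 𝒯, Y = delayed X τ'}) δ)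
    (hδstab : StableAt μ X τ δ)
    -- the partition sequence Π
    (s : ℕ → ℕ → ℝ)
    (hs0 : ∀ n, s n 0 = 0) (hsmono : ∀ n, StrictMono (s n))
    (hsunbdd : ∀ n, Tendsto (s n) atTop atTop)
    (hincr : ∀ n, Set.range (s n) ⊆ Set.range (s (n + 1)))
    (hmesh : ∀ ε > (0 : ℝ), ∃ N, ∀ n ≥ N, ∀ k, s n (k + 1) - s n k < ε)
    -- the ISU decomposition scheme with respect to Π: it exists on 𝒳 …
    (δISU : (Fin m → Ω → ℝ → ℝ) → Fin m → ℝ → Ω → ℝ)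
    (hISU0 : ∀ Y ∈ insert X {Y | ∃ τ' ∈ 𝒯, Y = delayed X τ'},
      ∀ (i : Fin m) ω, δISU Y i 0 ω = 0)
    (hISUcadlag : ∀ Y ∈ insert X {Y | ∃ τ' ∈ 𝒯, Y = delayed X τ'},
      ∀ (i : Fin m) ω, CadlagOn (fun t => δISU Y i t ω))
    (hISUlim : ∀ Y ∈ insert X {Y | ∃ τ' ∈ 𝒯, Y = delayed X τ'},
      ∀ (i : Fin m) (t : ℝ), 0 ≤ t →
        TendstoInMeasure μ
          (fun n ω => ∑ᶠ l : ℕ,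
            (ρ (stopProc Y (suV (s n) l i t)) ω - ρ (stopProc Y (suW (s n) l i t)) ω))
          atTop (δISU Y i t))
    -- … and is stable at X
    (hISUstab : StableAt μ X τ δISU) :
    ∀ᵐ ω ∂μ, ∀ (i : Fin m) (t : ℝ), 0 ≤ t → δ X i t ω = δISU X i t ω :=
  additive_normalized_stable_scheme_is_ISU_general μ X ρ 𝒯 τ hτmem hτphased δ hδ hδstab s hs0 hsmono
    hsunbdd hmesh δISU hISU0 hISUcadlag hISUlim hISUstab
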